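/- arXiv:2110.12816 — 3 statements merged into one kernel-verified Lean document; each statement's English description precedes it below -/
import Mathlib

section
/- Let $p: A \to B$ be a small extension of local Artin $k$-algebras (kernel $(t)$ principal and nonzero with $\mathfrak{m}_A t = 0$). Then $p$ is essential if and only if the induced map on Zariski cotangent spaces $\mathfrak{m}_A/\mathfrak{m}_A^2 \to \mathfrak{m}_B/\mathfrak{m}_B^2$ is an isomorphism. -/
open IsLocalRing

universe u

/-- A small extension `p : A → B` of local Artin `k`-algebras (surjective, with
kernel a nonzero principal ideal `(t)` satisfying `𝔪_A · (t) = 0`) is essential — i.e. every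
morphism `q : C → A` of local Artin `k`-algebras with `p ∘ q` surjective is itself surjective —
iff the induced map on Zariski cotangent spaces `𝔪_A/𝔪_A² → 𝔪_B/𝔪_B²` is an isomorphism
(expressed elementwise as surjectivity and injectivity). -/
theorem small_extension_essential_iff_cotangent_iso
    (k : Type u) [Field k]
    (A B : Type u) [CommRing A] [CommRing B]
    [IsLocalRing A] [IsLocalRing B]
    [IsArtinianRing A] [IsArtinianRing B]
    [Algebra k A] [Algebra k B]
    (hresA : Function.Bijective ((residue A).comp (algebraMap k A)))
    (hresB : Function.Bijective ((residue B).comp (algebraMap k B)))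
    (p : A →ₐ[k] B) (hloc : IsLocalHom p.toRingHom)
    (hsurj : Function.Surjective p)
    (t : A) (ht : RingHom.ker p.toRingHom = Ideal.span {t}) (htne : t ≠ 0)
    (hsmall : maximalIdeal A * RingHom.ker p.toRingHom = ⊥) :
    (∀ (C : Type u) [CommRing C] [IsLocalRing C] [IsArtinianRing C] [Algebra k C],
        Function.Bijective ((residue C).comp (algebraMap k C)) →
        ∀ (q : C →ₐ[k] A), IsLocalHom q.toRingHom →
          Function.Surjective (p.comp q) → Function.Surjective q) ↔
      ((∀ x ∈ maximalIdeal B, ∃ y ∈ maximalIdeal A, p y - x ∈ maximalIdeal B ^ 2) ∧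
       (∀ y ∈ maximalIdeal A, p y ∈ maximalIdeal B ^ 2 → y ∈ maximalIdeal A ^ 2)) := by
  classical
  -- basic facts
  have htker : t ∈ RingHom.ker p.toRingHom := by
    rw [ht]; exact Ideal.mem_span_singleton_self t
  have hpt : p t = 0 := htker
  have htm : t ∈ maximalIdeal A := by
    rw [IsLocalRing.mem_maximalIdeal, mem_nonunits_iff]
    intro hu
    have : IsUnit (p t) := hu.map p
    rw [hpt] at this
    exact not_isUnit_zero this
  have hmul0 : ∀ x ∈ maximalIdeal A, x * t = 0 := by
    intro x hx
    have : x * t ∈ maximalIdeal A * RingHom.ker p.toRingHom :=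
      Ideal.mul_mem_mul hx htker
    rw [hsmall] at this
    simpa using this
  have hdecomp : ∀ a : A, ∃ c : k, a - algebraMap k A c ∈ maximalIdeal A := by
    intro a
    obtain ⟨c, hc⟩ := hresA.2 (residue A a)
    refine ⟨c, ?_⟩
    have h0 : residue A (a - algebraMap k A c) = 0 := by
      rw [map_sub]
      rw [show residue A (algebraMap k A c) = residue A a from hc]
      ring
    exact Ideal.Quotient.eq_zero_iff_mem.mp h0
  have halgm : ∀ c : k, algebraMap k A c ∈ maximalIdeal A → c = 0 := by
    intro c hc
    apply hresA.1
    have h0 : residue A (algebraMap k A c) = 0 := Ideal.Quotient.eq_zero_iff_mem.mpr hc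
    simp only [RingHom.comp_apply, h0, map_zero]
  have hmemA : ∀ a : A, p a ∈ maximalIdeal B → a ∈ maximalIdeal A := by
    intro a ha
    rw [IsLocalRing.mem_maximalIdeal, mem_nonunits_iff]
    intro hu
    have : IsUnit (p a) := hu.map p
    rw [IsLocalRing.mem_maximalIdeal, mem_nonunits_iff] at ha
    exact ha this
  have hmemA' : ∀ a ∈ maximalIdeal A, p a ∈ maximalIdeal B := by
    intro a ha
    rw [IsLocalRing.mem_maximalIdeal, mem_nonunits_iff]
    intro hu
    have : IsUnit a := hloc.map_nonunit a hu
    rw [IsLocalRing.mem_maximalIdeal, mem_nonunits_iff] at ha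
    exact ha this
  have hkerm : RingHom.ker p.toRingHom ≤ maximalIdeal A := by
    rw [ht, Ideal.span_le, Set.singleton_subset_iff]; exact htm
  constructor
  · -- essential → cotangent iso
    intro hess
    -- first: t ∈ 𝔪_A ^ 2
    have ht2 : t ∈ maximalIdeal A ^ 2 := by
      by_contra ht2
      set M2 : Submodule k A := Submodule.restrictScalars k (maximalIdeal A ^ 2) with hM2def
      set π : A →ₗ[k] A ⧸ M2 := M2.mkQ with hπdef
      have htbar : π t ≠ 0 := by
        intro h
        rw [hπdef, Submodule.mkQ_apply, Submodule.Quotient.mk_eq_zero] at h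
        exact ht2 h
      obtain ⟨W, hW⟩ := Submodule.exists_isCompl (Submodule.span k {π t})
      set V : Submodule k A :=
        Submodule.comap π W ⊓ Submodule.restrictScalars k (maximalIdeal A) with hVdef
      have hVm : ∀ x ∈ V, x ∈ maximalIdeal A := fun x hx => hx.2
      have hVW : ∀ x ∈ V, π x ∈ W := fun x hx => hx.1
      have hM2V : ∀ x ∈ maximalIdeal A ^ 2, x ∈ V := by
        intro x hx
        refine ⟨?_, Ideal.pow_le_self two_ne_zero hx⟩
        have : π x = 0 := by
          rw [hπdef, Submodule.mkQ_apply, Submodule.Quotient.mk_eq_zero]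
          exact hx
        show π x ∈ W
        rw [this]
        exact W.zero_mem
      have htV : t ∉ V := by
        intro h
        have h1 : π t ∈ Submodule.span k {π t} ⊓ W :=
          ⟨Submodule.mem_span_singleton_self _, hVW t h⟩
        rw [hW.inf_eq_bot] at h1
        exact htbar (by simpa using h1)
      have hsplit : ∀ x ∈ maximalIdeal A, ∃ v ∈ V, ∃ c : k, x = v + c • t := by
        intro x hx
        have hxtop : π x ∈ Submodule.span k {π t} ⊔ W := by
          rw [hW.sup_eq_top]; trivial
        obtain ⟨y, hy, w, hw, hyw⟩ := Submodule.mem_sup.mp hxtop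
        obtain ⟨c, hc⟩ := Submodule.mem_span_singleton.mp hy
        refine ⟨x - c • t, ⟨?_, ?_⟩, c, by ring⟩
        · show π (x - c • t) ∈ W
          rw [map_sub, map_smul, hc]
          have : π x - y = w := by rw [← hyw]; abel
          rw [this]; exact hw
        · refine Submodule.sub_mem _ hx ?_
          show c • t ∈ maximalIdeal A
          rw [Algebra.smul_def]
          exact Ideal.mul_mem_left _ _ htm
      -- the subalgebra C₀ = k·1 ⊕ V
      set U : Submodule k A := (Submodule.span k {(1 : A)}) ⊔ V with hUdef
      have hmemU : ∀ x, x ∈ U ↔ ∃ c : k, ∃ v ∈ V, x = algebraMap k A c + v := by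
        intro x
        rw [hUdef, Submodule.mem_sup]
        constructor
        · rintro ⟨y, hy, v, hv, rfl⟩
          obtain ⟨c, rfl⟩ := Submodule.mem_span_singleton.mp hy
          exact ⟨c, v, hv, by rw [Algebra.algebraMap_eq_smul_one]⟩
        · rintro ⟨c, v, hv, rfl⟩
          exact ⟨algebraMap k A c, Submodule.mem_span_singleton.mpr
            ⟨c, (Algebra.algebraMap_eq_smul_one c).symm⟩, v, hv, rfl⟩
      have hU1 : (1 : A) ∈ U :=
        (hmemU 1).mpr ⟨1, 0, V.zero_mem, by simp⟩
      have hUmul : ∀ x y, x ∈ U → y ∈ U → x * y ∈ U := by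
        intro x y hx hy
        obtain ⟨c, v, hv, rfl⟩ := (hmemU x).mp hx
        obtain ⟨d, w, hw, rfl⟩ := (hmemU y).mp hy
        refine (hmemU _).mpr ⟨c * d, c • w + d • v + v * w, ?_, ?_⟩
        · refine Submodule.add_mem _ (Submodule.add_mem _ (V.smul_mem _ hw) (V.smul_mem _ hv)) ?_
          exact hM2V _ (by
            rw [pow_two]
            exact Ideal.mul_mem_mul (hVm v hv) (hVm w hw))
        · rw [map_mul, Algebra.smul_def, Algebra.smul_def]
          ring
      set C : Subalgebra k A := U.toSubalgebra hU1 hUmul with hCdef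
      have hmemC : ∀ x, x ∈ C ↔ x ∈ U := fun x => Iff.rfl
      have htC : t ∉ C := by
        intro h
        obtain ⟨c, v, hv, hvc⟩ := (hmemU t).mp h
        have : algebraMap k A c ∈ maximalIdeal A := by
          have : algebraMap k A c = t - v := by rw [hvc]; ring
          rw [this]
          exact Submodule.sub_mem _ htm (hVm v hv)
        have hc0 : c = 0 := halgm c this
        rw [hc0, map_zero, zero_add] at hvc
        rw [hvc] at htV
        exact htV hv
      -- p restricted to C is bijective onto B
      have hsurjC : Function.Surjective (p.comp C.val) := by
        intro b
        obtain ⟨a, rfl⟩ := hsurj b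
        obtain ⟨c, hc⟩ := hdecomp a
        obtain ⟨v, hv, d, hvd⟩ := hsplit _ hc
        have haeq : a = (algebraMap k A c + v) + d • t := by
          have : a - algebraMap k A c = v + d • t := hvd
          linear_combination this
        refine ⟨⟨algebraMap k A c + v, (hmemU _).mpr ⟨c, v, hv, rfl⟩⟩, ?_⟩
        show p (algebraMap k A c + v) = p a
        rw [haeq]
        simp [hpt]
      have hinjC : Function.Injective (p.comp C.val) := by
        rw [injective_iff_map_eq_zero]
        intro x hx
        have hxker : (x : A) ∈ RingHom.ker p.toRingHom := hx
        obtain ⟨c, v, hv, hxcv⟩ := (hmemU (x : A)).mp x.2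
        have hxm : (x : A) ∈ maximalIdeal A := hkerm hxker
        have hc0 : c = 0 := by
          apply halgm
          have : algebraMap k A c = (x : A) - v := by rw [hxcv]; ring
          rw [this]
          exact Submodule.sub_mem _ hxm (hVm v hv)
        rw [hc0, map_zero, zero_add] at hxcv
        -- x = v ∈ V, and x ∈ (t); write x = c' • t
        rw [ht, Ideal.mem_span_singleton'] at hxker
        obtain ⟨a, ha⟩ := hxker
        obtain ⟨c', hc'⟩ := hdecomp a
        have hat : a * t = c' • t := by
          have h0 : (a - algebraMap k A c') * t = 0 := hmul0 _ hc'
          rw [Algebra.smul_def]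
          linear_combination h0
        have hxv : (x : A) = c' • t := by rw [← ha, hat]
        have hc'0 : c' = 0 := by
          by_contra hne
          have hπx : π (x : A) ∈ W := hVW _ (hxcv ▸ hv)
          have : π t ∈ W := by
            have h1 : π (x : A) = c' • π t := by rw [hxv, map_smul]
            have h2 : π t = c'⁻¹ • π (x : A) := by
              rw [h1, smul_smul, inv_mul_cancel₀ hne, one_smul]
            rw [h2]; exact W.smul_mem _ hπx
          have h3 : π t ∈ Submodule.span k {π t} ⊓ W :=
            ⟨Submodule.mem_span_singleton_self _, this⟩
          rw [hW.inf_eq_bot] at h3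
          exact htbar (by simpa using h3)
        have : (x : A) = 0 := by rw [hxv, hc'0, zero_smul]
        exact Subtype.ext this
      set e : C ≃ₐ[k] B := AlgEquiv.ofBijective (p.comp C.val) ⟨hinjC, hsurjC⟩ with hedef
      have heval : ∀ x : C, e x = p (x : A) := fun x => rfl
      set q : B →ₐ[k] A := C.val.comp (e.symm : B →ₐ[k] C) with hqdef
      have hqval : ∀ b : B, q b = ((e.symm b : C) : A) := fun b => rfl
      have hpq : ∀ b : B, p (q b) = b := by
        intro b
        rw [hqval, ← heval, AlgEquiv.apply_symm_apply]
      have hql : IsLocalHom q.toRingHom := by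
        constructor
        intro b hb
        have : IsUnit (p (q b)) := by
          have : IsUnit (q b) := hb
          exact this.map p
        rwa [hpq] at this
      have hqsurj : Function.Surjective (p.comp q) := by
        intro b
        exact ⟨b, hpq b⟩
      have hqs : Function.Surjective q := hess B hresB q hql hqsurj
      obtain ⟨b, hb⟩ := hqs t
      apply htC
      rw [← hb, hqval]
      exact (e.symm b).2
    -- now derive the two conjuncts
    constructor
    · intro x hx
      obtain ⟨y, rfl⟩ := hsurj x
      exact ⟨y, hmemA y hx, by simp⟩
    · intro y hy hpy
      have h1 : maximalIdeal B = Ideal.map p.toRingHom (maximalIdeal A) := by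
        apply le_antisymm
        · intro x hx
          obtain ⟨a, rfl⟩ := hsurj x
          exact Ideal.mem_map_of_mem _ (hmemA a hx)
        · rw [Ideal.map_le_iff_le_comap]
          intro a ha
          exact hmemA' a ha
      rw [h1, ← Ideal.map_pow] at hpy
      obtain ⟨z, hz, hzy⟩ :=
        (Ideal.mem_map_iff_of_surjective p.toRingHom hsurj).mp hpy
      have hyz : y - z ∈ RingHom.ker p.toRingHom := by
        rw [RingHom.mem_ker, map_sub]
        change p y - p z = 0
        rw [show p.toRingHom z = p z from rfl] at hzy
        rw [hzy]; ring
      rw [ht, Ideal.mem_span_singleton'] at hyz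
      obtain ⟨a, ha⟩ := hyz
      obtain ⟨c, hc⟩ := hdecomp a
      have hat : a * t = algebraMap k A c * t := by
        have h0 : (a - algebraMap k A c) * t = 0 := hmul0 _ hc
        linear_combination h0
      have : y = z + algebraMap k A c * t := by
        rw [← hat, ha]; ring
      rw [this]
      exact Ideal.add_mem _ hz (Ideal.mul_mem_left _ _ ht2)
  · -- cotangent iso → essential
    rintro ⟨-, hinj⟩ C _ _ _ _ _ q _ hqs
    have ht2 : t ∈ maximalIdeal A ^ 2 := by
      apply hinj t htm
      rw [hpt]
      exact Ideal.zero_mem _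
    have hstep : ∀ a : A, ∃ c : C, ∃ d : k, a = q c + d • t := by
      intro a
      obtain ⟨c, hc⟩ := hqs (p a)
      have hker : a - q c ∈ RingHom.ker p.toRingHom := by
        rw [RingHom.mem_ker, map_sub]
        change p a - p (q c) = 0
        rw [show p (q c) = p a from hc]
        ring
      rw [ht, Ideal.mem_span_singleton'] at hker
      obtain ⟨u, hu⟩ := hker
      obtain ⟨d, hd⟩ := hdecomp u
      refine ⟨c, d, ?_⟩
      have hut : u * t = d • t := by
        have h0 : (u - algebraMap k A d) * t = 0 := hmul0 _ hd
        rw [Algebra.smul_def]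
        linear_combination h0
      rw [← hut]
      linear_combination -hu
    have htr : ∃ c : C, q c = t := by
      have h2 : t ∈ maximalIdeal A * maximalIdeal A := by
        rw [← pow_two]; exact ht2
      refine Submodule.mul_induction_on (C := fun z => ∃ c : C, q c = z) h2 ?_ ?_
      · intro x hx y hy
        obtain ⟨c, d, hcd⟩ := hstep x
        obtain ⟨c', d', hcd'⟩ := hstep y
        have hqc : q c ∈ maximalIdeal A := by
          have : q c = x - d • t := by rw [hcd]; ring
          rw [this]
          refine Submodule.sub_mem _ hx ?_
          show d • t ∈ maximalIdeal A
          rw [Algebra.smul_def]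
          exact Ideal.mul_mem_left _ _ htm
        have hqc' : q c' ∈ maximalIdeal A := by
          have : q c' = y - d' • t := by rw [hcd']; ring
          rw [this]
          refine Submodule.sub_mem _ hy ?_
          show d' • t ∈ maximalIdeal A
          rw [Algebra.smul_def]
          exact Ideal.mul_mem_left _ _ htm
        refine ⟨c * c', ?_⟩
        rw [map_mul]
        have h1 : q c' * t = 0 := hmul0 _ hqc'
        have h2' : q c * t = 0 := hmul0 _ hqc
        have h3 : t * t = 0 := hmul0 _ htm
        rw [hcd, hcd', Algebra.smul_def, Algebra.smul_def]
        linear_combination (-(algebraMap k A d)) * h1 - algebraMap k A d' * h2'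
          - (algebraMap k A d * algebraMap k A d') * h3
      · rintro x y ⟨cx, hx⟩ ⟨cy, hy⟩
        exact ⟨cx + cy, by rw [map_add, hx, hy]⟩
    intro a
    obtain ⟨c, d, hcd⟩ := hstep a
    obtain ⟨c0, hc0⟩ := htr
    refine ⟨c + d • c0, ?_⟩
    rw [map_add, map_smul, hc0, ← hcd]
end

section
/- Let $p: A \to B$ be a small extension of local Artin $k$-algebras. Then $p$ is not essential if and only if $p$ admits a $k$-algebra section $s: B \to A$ with $p \circ s = \mathrm{id}_B$. -/
open IsLocalRing

universe u

/-- A small extension `p : A → B` of local Artin `k`-algebras is *not* essential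
iff it admits a `k`-algebra section `s : B → A` with `p ∘ s = id_B`. -/
theorem small_extension_not_essential_iff_section
    (k : Type u) [Field k]
    (A B : Type u) [CommRing A] [CommRing B]
    [IsLocalRing A] [IsLocalRing B]
    [IsArtinianRing A] [IsArtinianRing B]
    [Algebra k A] [Algebra k B]
    (hresA : Function.Bijective ((residue A).comp (algebraMap k A)))
    (hresB : Function.Bijective ((residue B).comp (algebraMap k B)))
    (p : A →ₐ[k] B) (hloc : IsLocalHom p.toRingHom)
    (hsurj : Function.Surjective p)
    (t : A) (ht : RingHom.ker p.toRingHom = Ideal.span {t}) (htne : t ≠ 0)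
    (hsmall : maximalIdeal A * RingHom.ker p.toRingHom = ⊥) :
    (¬ (∀ (C : Type u) [CommRing C] [IsLocalRing C] [IsArtinianRing C] [Algebra k C],
        Function.Bijective ((residue C).comp (algebraMap k C)) →
        ∀ (q : C →ₐ[k] A), IsLocalHom q.toRingHom →
          Function.Surjective (p.comp q) → Function.Surjective q)) ↔
      ∃ s : B →ₐ[k] A, p.comp s = AlgHom.id k B := by
  have htker : t ∈ RingHom.ker p.toRingHom := ht ▸ Ideal.mem_span_singleton_self t
  -- every element of ker p is a k-multiple of t
  have hker_elem : ∀ x ∈ RingHom.ker p.toRingHom, ∃ c : k, x = algebraMap k A c * t := by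
    intro x hx
    rw [ht, Ideal.mem_span_singleton] at hx
    obtain ⟨a, rfl⟩ := hx
    obtain ⟨c, hc⟩ := hresA.2 (residue A a)
    have hm : a - algebraMap k A c ∈ maximalIdeal A := by
      rw [← IsLocalRing.ker_residue (R := A), RingHom.mem_ker, map_sub, sub_eq_zero]
      exact hc.symm
    have hz : (a - algebraMap k A c) * t = 0 := by
      have : (a - algebraMap k A c) * t ∈ maximalIdeal A * RingHom.ker p.toRingHom :=
        Ideal.mul_mem_mul hm htker
      rw [hsmall] at this
      simpa using this
    refine ⟨c, ?_⟩
    have : t * a = t * (algebraMap k A c) + (a - algebraMap k A c) * t := by ring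
    rw [this, hz, add_zero, mul_comm]
  constructor
  · intro hne
    push_neg at hne
    obtain ⟨C, _, _, _, _, hresC, q, hqloc, hpq, hqns⟩ := hne
    -- ker (p ∘ q) ⊆ ker q
    have hkerq : ∀ x : C, p (q x) = 0 → q x = 0 := by
      intro x hx
      by_contra hne0
      obtain ⟨c, hc⟩ := hker_elem (q x) (by rwa [RingHom.mem_ker])
      have hcne : c ≠ 0 := by
        rintro rfl
        simp at hc
        exact hne0 hc
      -- then t is in the range of q
      have htr : t ∈ q.range := by
        refine ⟨algebraMap k C c⁻¹ * x, ?_⟩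
        show q (algebraMap k C c⁻¹ * x) = t
        rw [map_mul, AlgHom.commutes, hc, ← mul_assoc, ← map_mul,
          inv_mul_cancel₀ hcne, map_one, one_mul]
      -- so q is surjective, contradiction
      apply hqns
      intro a
      obtain ⟨y, hy⟩ := hpq (p a)
      have : a - q y ∈ RingHom.ker p.toRingHom := by
        rw [RingHom.mem_ker]
        simp only [AlgHom.comp_apply] at hy
        simp [map_sub, hy]
      obtain ⟨c', hc'⟩ := hker_elem _ this
      obtain ⟨z, hz⟩ := htr
      refine ⟨y + algebraMap k C c' * z, ?_⟩
      show q (y + algebraMap k C c' * z) = a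
      rw [map_add, map_mul, AlgHom.commutes, show q z = t from hz, ← hc']
      ring
    -- build the section via first isomorphism theorem
    set f : C →ₐ[k] B := p.comp q with hf
    have hfs : Function.Surjective f := hpq
    have hsub : ∀ a : C, a ∈ RingHom.ker f → q a = 0 := by
      intro a ha
      rw [RingHom.mem_ker] at ha
      exact hkerq a ha
    set L : C ⧸ RingHom.ker f →ₐ[k] A := Ideal.Quotient.liftₐ _ q hsub with hL
    set e : (C ⧸ RingHom.ker f) ≃ₐ[k] B := Ideal.quotientKerAlgEquivOfSurjective hfs with he
    refine ⟨L.comp e.symm.toAlgHom, ?_⟩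
    ext b
    obtain ⟨x, hx⟩ := Ideal.Quotient.mk_surjective (e.symm b)
    have heb : f x = b := by
      have : e (Ideal.Quotient.mk _ x) = e (e.symm b) := congrArg e hx
      rw [AlgEquiv.apply_symm_apply] at this
      rw [← this]
      simp only [he, Ideal.quotientKerAlgEquivOfSurjective_apply]
      exact (RingHom.kerLift_mk (f : C →+* B) x).symm
    simp only [AlgHom.comp_apply, AlgHom.coe_id, id_eq, AlgEquiv.coe_algHom]
    rw [← hx]
    have : L (Ideal.Quotient.mk _ x) = q x := by
      simp [hL]
      exact Ideal.Quotient.lift_mk _ _ _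
    rw [this]
    exact heb
  · rintro ⟨s, hs⟩ hess
    have hps : ∀ b, p (s b) = b := fun b => congrFun (congrArg DFunLike.coe hs) b
    have hsloc : IsLocalHom s.toRingHom := by
      constructor
      intro b hb
      have h2 : IsUnit (p (s b)) := hb.map p
      rwa [hps] at h2
    have hssurj : Function.Surjective s := by
      apply hess B hresB s hsloc
      have : p.comp s = AlgHom.id k B := hs
      rw [this]
      exact fun b => ⟨b, rfl⟩
    have hpinj : Function.Injective p := by
      intro x y hxy
      obtain ⟨x', rfl⟩ := hssurj x
      obtain ⟨y', rfl⟩ := hssurj y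
      rw [hps, hps] at hxy
      rw [hxy]
    apply htne
    apply hpinj
    rw [map_zero]
    rwa [← RingHom.mem_ker]
end

section
/- Let $X$ be a locally Noetherian scheme (or more generally a locally Noetherian topological space with the specialization order) and let $E \subseteq X$. If $E$ is ind-constructible and stable under generalization, then $E$ is open. -/
open AlgebraicGeometry

/-- A set is constructible if it is a finite union of locally closed sets. -/
def IsConstructibleSet {X : Type*} [TopologicalSpace X] (s : Set X) : Prop :=
  ∃ (n : ℕ) (f : Fin n → Set X), (∀ i, IsLocallyClosed (f i)) ∧ s = ⋃ i, f i

/-- A set `E` is ind-constructible if every point has an open neighbourhood `U` such that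
`E ∩ U` is a (possibly infinite) union of constructible sets. -/
def IsIndConstructible {X : Type*} [TopologicalSpace X] (E : Set X) : Prop :=
  ∀ x : X, ∃ U : Set X, IsOpen U ∧ x ∈ U ∧
    ∃ (ι : Type) (f : ι → Set X), (∀ i, IsConstructibleSet (f i)) ∧ E ∩ U = ⋃ i, f i

open TopologicalSpace Set

/-- Key topological lemma: in a Noetherian sober space, a set which is locally (at each of
its points) contained in a locally closed subset of itself, and which is stable under
generalization, is open. -/
lemma key_open_of_locallyClosed_pieces {Y : Type*} [TopologicalSpace Y]
    [TopologicalSpace.NoetherianSpace Y] [QuasiSober Y]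
    (F : Set Y) (hF : ∀ x ∈ F, ∃ L, IsLocallyClosed L ∧ x ∈ L ∧ L ⊆ F)
    (hgen : ∀ t t' : Y, t ∈ F → t ∈ closure {t'} → t' ∈ F) : IsOpen F := by
  have main : ∀ Z : Closeds Y, IsClosed (Fᶜ ∩ (Z : Set Y)) := by
    intro Z
    refine WellFounded.induction (C := fun Z : Closeds Y => IsClosed (Fᶜ ∩ (Z : Set Y)))
      wellFounded_lt Z ?_
    intro Z IH
    obtain ⟨S, hS, hSsup⟩ := TopologicalSpace.NoetherianSpace.exists_finset_irreducible Z
    have hZ : (Z : Set Y) = ⋃ k ∈ S, (k : Set Y) := by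
      simp [hSsup, ← Finset.sup_id_eq_sSup, Closeds.coe_finset_sup]
    rw [hZ, Set.inter_iUnion₂]
    refine Set.Finite.isClosed_biUnion S.finite_toSet ?_
    intro k hk
    obtain ⟨η, hη⟩ := QuasiSober.sober (hS ⟨k, hk⟩) k.isClosed
    have hηk : η ∈ (k : Set Y) := by rw [← hη]; exact subset_closure rfl
    have hkZ : k ≤ Z := hSsup ▸ Finset.le_sup (f := id) hk
    by_cases hηF : η ∈ F
    · obtain ⟨L, ⟨O, C, hO, hC, rfl⟩, hηL, hLF⟩ := hF η hηF
      have hkC : (k : Set Y) ⊆ C := by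
        rw [← hη]
        exact closure_minimal (Set.singleton_subset_iff.mpr hηL.2) hC
      have hOkF : O ∩ (k : Set Y) ⊆ F := fun y hy => hLF ⟨hy.1, hkC hy.2⟩
      set Z' : Closeds Y := ⟨(k : Set Y) \ O, k.isClosed.sdiff hO⟩ with hZ'def
      have hZ'lt : Z' < Z := by
        refine lt_of_le_of_ne (le_trans ?_ hkZ) ?_
        · intro y hy; exact hy.1
        · intro h
          have : η ∈ (Z' : Set Y) := by
            rw [h]; exact hkZ hηk
          exact this.2 hηL.1
      have heq : Fᶜ ∩ (k : Set Y) = Fᶜ ∩ (Z' : Set Y) := by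
        ext y
        constructor
        · rintro ⟨hy1, hy2⟩
          refine ⟨hy1, hy2, fun hyO => hy1 (hOkF ⟨hyO, hy2⟩)⟩
        · rintro ⟨hy1, hy2⟩
          exact ⟨hy1, hy2.1⟩
      rw [heq]
      exact IH Z' hZ'lt
    · have : Fᶜ ∩ (k : Set Y) = (k : Set Y) := by
        refine Set.inter_eq_right.mpr fun t ht => ?_
        intro htF
        exact hηF (hgen t η htF (hη ▸ ht))
      rw [this]
      exact k.isClosed
  have := main ⟨univ, isClosed_univ⟩
  simp only [Closeds.coe_mk, Set.inter_univ] at this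
  simpa using this.isOpen_compl

/-- **EGA IV, 1.10.1.** On a locally Noetherian scheme, a subset which is
ind-constructible and stable under generalization (if `t ∈ E` and `t ∈ closure {t'}` then
`t' ∈ E`) is open. -/
theorem indConstructible_stableUnderGeneralization_isOpen
    (X : Scheme) [IsLocallyNoetherian X] (E : Set X)
    (hind : IsIndConstructible E)
    (hgen : ∀ t t' : X, t ∈ E → t ∈ closure {t'} → t' ∈ E) :
    IsOpen E := by
  rw [isOpen_iff_forall_mem_open]
  intro x hx
  obtain ⟨U, hUopen, hxU, ι, f, hf, hEU⟩ := hind x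
  obtain ⟨V, hVaff, hxV, hVU⟩ := (Opens.isBasis_iff_nbhd.mp X.isBasis_affineOpens)
    (show x ∈ (⟨U, hUopen⟩ : X.Opens) from hxU)
  have hVU' : (V : Set X) ⊆ U := hVU
  haveI : IsNoetherianRing Γ(X, V) := IsLocallyNoetherian.component_noetherian ⟨V, hVaff⟩
  haveI : TopologicalSpace.NoetherianSpace V := noetherianSpace_of_isAffineOpen V hVaff
  have hemb : Topology.IsOpenEmbedding ((↑) : V → X) := V.2.isOpenEmbedding_subtypeVal
  haveI : QuasiSober V := hemb.quasiSober
  set F : Set V := Subtype.val ⁻¹' E with hFdef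
  have hFopen : IsOpen F := by
    refine key_open_of_locallyClosed_pieces F ?_ ?_
    · rintro ⟨y, hyV⟩ hyF
      have hyEU : y ∈ E ∩ U := ⟨hyF, hVU' hyV⟩
      rw [hEU] at hyEU
      obtain ⟨_, ⟨i, rfl⟩, hyi⟩ := hyEU
      obtain ⟨n, g, hg, hfe⟩ := hf i
      have hyi' : y ∈ f i := hyi
      rw [hfe] at hyi'
      obtain ⟨_, ⟨j, rfl⟩, hyj⟩ := hyi'
      refine ⟨Subtype.val ⁻¹' (g j), (hg j).preimage continuous_subtype_val, hyj, ?_⟩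
      intro z hz
      have : Subtype.val z ∈ E ∩ U := by
        rw [hEU]
        exact Set.mem_iUnion.mpr ⟨i, hfe ▸ Set.mem_iUnion.mpr ⟨j, hz⟩⟩
      exact this.1
    · intro t t' ht htc
      have h1 : Subtype.val t ∈ closure {Subtype.val t'} := by
        refine map_mem_closure continuous_subtype_val htc ?_
        intro a ha
        rw [Set.mem_singleton_iff] at ha
        subst ha
        exact Set.mem_singleton _
      exact hgen _ _ ht h1
  refine ⟨E ∩ V, Set.inter_subset_left, ?_, ⟨hx, hxV⟩⟩
  have : Subtype.val '' F = (V : Set X) ∩ E := Subtype.image_preimage_coe _ _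
  rw [Set.inter_comm] at this
  rw [← this]
  exact hemb.isOpenMap _ hFopen
end
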